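/- Fix a positive integer n, write n = 3q + r with q = ⌊n/3⌋, fix σ ∈ {±1}^n, and set h = max(h(σ), h(−σ)). If h ≤ q + r, then ν_max(σ) = q. -/

import Mathlib

/-!
Upper bound: a napkinless diner finds both adjacent napkins taken, necessarily by the two
neighbours, who are therefore served. Hence napkinless diners are never adjacent, the `2ν` napkins
next to them are distinct and claimed, and as every served diner claims one napkin, `3ν ≤ n`.

Lower bound: for `k < q`, seat the `k`-th diner preferring the right, the `(r + k)`-th diner who is
not among the first `q` of either preference, and the `k`-th diner preferring the left, in this
order from left to right. The drift bound `h ≤ q + r` forces the middle diner to arrive after the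
other two, who have then taken both napkins next to them.
-/

namespace Napkin

variable {n q : ℕ}

/-- The napkin to the left of seat `s`; napkin `s` itself is the one to the right of
seat `s`, placed between seats `s` and `s + 1` around the circular table. -/
def leftNapkin (s : Fin n) : Fin n := ⟨((s : ℕ) + (n - 1)) % n, Nat.mod_lt _ s.pos⟩

/-- Process the diners `0, 1, …, n-1` in their arrival order.  Here `w i = j` means that
diner `j` sits in seat `i` (so diner `j` sits in seat `w.symm j`), and `σ j = true`
means diner `j` prefers the napkin to their right.  Each diner takes their preferred
adjacent napkin if it is unclaimed, otherwise the other adjacent napkin if it is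
unclaimed, and otherwise is napkinless.  The returned state consists of the set of
claimed napkins and the set of napkinless diners. -/
def dine (σ : Fin n → Bool) (w : Equiv.Perm (Fin n)) :
    Finset (Fin n) × Finset (Fin n) :=
  (List.finRange n).foldl
    (fun st j =>
      let s := w.symm j
      let pref := if σ j then s else leftNapkin s
      let other := if σ j then leftNapkin s else s
      if pref ∉ st.1 then (insert pref st.1, st.2)
      else if other ∉ st.1 then (insert other st.1, st.2)
      else (st.1, insert j st.2))
    (∅, ∅)

/-- The set of napkinless diners for the seating arrangement `(w, σ)`. -/
def napkinless (σ : Fin n → Bool) (w : Equiv.Perm (Fin n)) : Finset (Fin n) :=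
  (dine σ w).2

/-- `ν(w,σ)`, the number of napkinless diners. -/
def nu (σ : Fin n → Bool) (w : Equiv.Perm (Fin n)) : ℕ := (napkinless σ w).card

/-- A seating order puts diner `1` in seat `1` (index `0` here). -/
def IsSeating (w : Equiv.Perm (Fin n)) : Prop :=
  ∀ i : Fin n, (i : ℕ) = 0 → (w i : ℕ) = 0

instance : DecidablePred (IsSeating (n := n)) := fun w =>
  decidable_of_iff (∀ i : Fin n, (i : ℕ) = 0 → (w i : ℕ) = 0) Iff.rfl

/-- `ν_max(σ)`, the maximal number of napkinless diners over all seating orders. -/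
def nuMax (σ : Fin n → Bool) : ℕ :=
  (Finset.univ.filter fun w : Equiv.Perm (Fin n) => IsSeating w).sup (nu σ)

/-- The value `±1` of a napkin preference. -/
def sign (b : Bool) : ℤ := if b then 1 else -1

/-- The drift `h(σ) = max(0, max over prefixes of σ₁ + ⋯ + σᵢ)`. -/
def drift (σ : Fin n → Bool) : ℕ :=
  (Finset.range (n + 1)).sup fun i =>
    (∑ j ∈ Finset.univ.filter (fun j : Fin n => (j : ℕ) < i), sign (σ j)).toNat

/-- A bench collection: `q` pairwise disjoint triples `aᵢ < bᵢ < cᵢ` in `{1,…,n}`. -/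
structure BenchCollection (n q : ℕ) where
  a : Fin q → Fin n
  b : Fin q → Fin n
  c : Fin q → Fin n
  hab : ∀ i, a i < b i
  hbc : ∀ i, b i < c i
  disj : ∀ i j : Fin q, i ≠ j →
    Disjoint ({a i, b i, c i} : Finset (Fin n)) ({a j, b j, c j} : Finset (Fin n))

/-- A bench is balanced when its two smallest members have opposite preferences. -/
def Balanced (σ : Fin n → Bool) (β : BenchCollection n q) (i : Fin q) : Prop :=
  sign (σ (β.a i)) + sign (σ (β.b i)) = 0

instance (σ : Fin n → Bool) (β : BenchCollection n q) :
    DecidablePred (Balanced σ β) := fun i =>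
  decidable_of_iff (sign (σ (β.a i)) + sign (σ (β.b i)) = 0) Iff.rfl

/-- `b(β,σ)`, the number of balanced benches of `β`. -/
def balance (σ : Fin n → Bool) (β : BenchCollection n q) : ℕ :=
  (Finset.univ.filter fun i => Balanced σ β i).card

open Finset

section Dining

variable (σ : Fin n → Bool) (w : Equiv.Perm (Fin n))

def prefNapkin (j : Fin n) : Fin n := if σ j then w.symm j else leftNapkin (w.symm j)

def otherNapkin (j : Fin n) : Fin n := if σ j then leftNapkin (w.symm j) else w.symm j

def dineStep (st : Finset (Fin n) × Finset (Fin n)) (j : Fin n) :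
    Finset (Fin n) × Finset (Fin n) :=
  if prefNapkin σ w j ∉ st.1 then (insert (prefNapkin σ w j) st.1, st.2)
  else if otherNapkin σ w j ∉ st.1 then (insert (otherNapkin σ w j) st.1, st.2)
  else (st.1, insert j st.2)

theorem dine_eq_foldl : dine σ w = (List.finRange n).foldl (dineStep σ w) (∅, ∅) := rfl

variable {σ w}

theorem le_dineStep (st : Finset (Fin n) × Finset (Fin n)) (j : Fin n) :
    st ≤ dineStep σ w st j := by
  unfold dineStep
  split_ifs <;> simp [Prod.le_def, subset_insert]

theorem le_foldl_dineStep (l : List (Fin n)) (st : Finset (Fin n) × Finset (Fin n)) :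
    st ≤ l.foldl (dineStep σ w) st := by
  induction l generalizing st with
  | nil => exact le_rfl
  | cons j l ih => exact (le_dineStep st j).trans (ih _)

theorem prefNapkin_mem_foldl {l : List (Fin n)} {j : Fin n} (hj : j ∈ l)
    (st : Finset (Fin n) × Finset (Fin n)) :
    prefNapkin σ w j ∈ (l.foldl (dineStep σ w) st).1 := by
  obtain ⟨l₁, l₂, rfl⟩ := List.append_of_mem hj
  rw [List.foldl_append, List.foldl_cons]
  refine (le_foldl_dineStep l₂ _).1 ?_
  unfold dineStep
  split_ifs with h <;> simp_all

theorem dineStep_of_napkins_mem {st : Finset (Fin n) × Finset (Fin n)} {j : Fin n}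
    (hr : w.symm j ∈ st.1) (hl : leftNapkin (w.symm j) ∈ st.1) :
    dineStep σ w st j = (st.1, insert j st.2) := by
  unfold dineStep prefNapkin otherNapkin
  cases σ j <;> simp [hr, hl]

theorem mem_foldl_snd_of_napkins_mem (l₁ l₂ : List (Fin n)) {j : Fin n}
    (st : Finset (Fin n) × Finset (Fin n))
    (hr : w.symm j ∈ (l₁.foldl (dineStep σ w) st).1)
    (hl : leftNapkin (w.symm j) ∈ (l₁.foldl (dineStep σ w) st).1) :
    j ∈ ((l₁ ++ j :: l₂).foldl (dineStep σ w) st).2 := by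
  rw [List.foldl_append, List.foldl_cons, dineStep_of_napkins_mem hr hl]
  exact (le_foldl_dineStep l₂ _).2 (mem_insert_self j _)

theorem mem_napkinless_of_neighbours {X Y Z : Fin n} (hXZ : X < Z) (hYZ : Y < Z)
    (hX : prefNapkin σ w X = leftNapkin (w.symm Z)) (hY : prefNapkin σ w Y = w.symm Z) :
    Z ∈ napkinless σ w := by
  obtain ⟨l₁, l₂, hsplit⟩ := List.append_of_mem (List.mem_finRange Z)
  have hbefore : ∀ j < Z, j ∈ l₁ := by
    intro j hj
    have hsorted := List.pairwise_lt_finRange n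
    rw [hsplit, List.pairwise_append, List.pairwise_cons] at hsorted
    have hmem := List.mem_finRange j
    rw [hsplit, List.mem_append, List.mem_cons] at hmem
    rcases hmem with h | rfl | h
    · exact h
    · exact absurd hj (lt_irrefl _)
    · exact absurd hj (hsorted.2.1.1 j h).not_gt
  rw [napkinless, dine_eq_foldl, hsplit]
  apply mem_foldl_snd_of_napkins_mem
  · exact hY ▸ prefNapkin_mem_foldl (hbefore Y hYZ) _
  · exact hX ▸ prefNapkin_mem_foldl (hbefore X hXZ) _

end Dining

section LeftNapkin

theorem leftNapkin_injective : Function.Injective (leftNapkin : Fin n → Fin n) := by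
  intro a b h
  have h' : (a + (n - 1)) % n = (b + (n - 1)) % n := congrArg Fin.val h
  have hab := Nat.ModEq.add_right_cancel' (n - 1) h'
  rw [Nat.ModEq, Nat.mod_eq_of_lt a.isLt, Nat.mod_eq_of_lt b.isLt] at hab
  exact Fin.ext hab

theorem leftNapkin_eq_of_val_eq_succ {a b : Fin n} (h : (a : ℕ) = b + 1) :
    leftNapkin a = b := by
  ext
  change (a + (n - 1)) % n = b
  rw [h, show (b : ℕ) + 1 + (n - 1) = b + n by omega, Nat.add_mod_right,
    Nat.mod_eq_of_lt b.isLt]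

theorem leftNapkin_add_one [NeZero n] (s : Fin n) : leftNapkin s + 1 = s := by
  have hn := Nat.pos_of_neZero n
  ext
  rw [Fin.val_add, Fin.val_one', leftNapkin, ← Nat.add_mod, Nat.add_assoc,
    Nat.sub_add_cancel hn, Nat.add_mod_right, Nat.mod_eq_of_lt s.isLt]

theorem leftNapkin_add [NeZero n] (s c : Fin n) : leftNapkin (s + c) = leftNapkin s + c := by
  rw [eq_comm, ← add_left_inj 1, leftNapkin_add_one, add_right_comm, leftNapkin_add_one]

end LeftNapkin

section UpperBound

variable {σ : Fin n → Bool} {w : Equiv.Perm (Fin n)}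

theorem dineStep_cases (st : Finset (Fin n) × Finset (Fin n)) (j : Fin n) :
    (∃ v, (w.symm j = v ∨ leftNapkin (w.symm j) = v) ∧ v ∉ st.1 ∧
      dineStep σ w st j = (insert v st.1, st.2)) ∨
    (w.symm j ∈ st.1 ∧ leftNapkin (w.symm j) ∈ st.1 ∧
      dineStep σ w st j = (st.1, insert j st.2)) := by
  by_cases hr : w.symm j ∈ st.1 <;> by_cases hl : leftNapkin (w.symm j) ∈ st.1
  · exact Or.inr ⟨hr, hl, dineStep_of_napkins_mem hr hl⟩
  all_goals
    left
    unfold dineStep prefNapkin otherNapkin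
    cases σ j <;> simp [hr, hl]

variable (w) in
/-- What the state `st` of the dining process satisfies once the diners in `P` have been served. -/
structure DineInvariant (P : Finset (Fin n)) (st : Finset (Fin n) × Finset (Fin n)) : Prop where
  card_le : #st.1 + #st.2 ≤ #P
  napkinless_subset : st.2 ⊆ P
  exists_claimer :
    ∀ v ∈ st.1, ∃ j ∈ P, j ∉ st.2 ∧ (w.symm j = v ∨ leftNapkin (w.symm j) = v)
  napkins_mem : ∀ j ∈ st.2, w.symm j ∈ st.1 ∧ leftNapkin (w.symm j) ∈ st.1

theorem DineInvariant.dineStep {P : Finset (Fin n)} {st : Finset (Fin n) × Finset (Fin n)}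
    {j : Fin n} (h : DineInvariant w P st) (hj : j ∉ P) :
    DineInvariant w (insert j P) (dineStep σ w st j) := by
  rcases dineStep_cases st j with ⟨v, hv, hvst, heq⟩ | ⟨hr, hl, heq⟩ <;> rw [heq]
  · refine ⟨?_, h.napkinless_subset.trans (subset_insert _ _), ?_, ?_⟩
    · rw [card_insert_of_notMem hvst, card_insert_of_notMem hj]
      linarith [h.card_le]
    · intro u hu
      rcases mem_insert.1 hu with rfl | hu
      · exact ⟨j, mem_insert_self _ _, fun hj' => hj (h.napkinless_subset hj'), hv⟩
      · obtain ⟨i, hi, hi', hiu⟩ := h.exists_claimer u hu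
        exact ⟨i, mem_insert_of_mem hi, hi', hiu⟩
    · intro i hi
      exact ⟨mem_insert_of_mem (h.napkins_mem i hi).1, mem_insert_of_mem (h.napkins_mem i hi).2⟩
  · refine ⟨?_, insert_subset_insert _ h.napkinless_subset, ?_, ?_⟩
    · rw [card_insert_of_notMem hj]
      linarith [h.card_le, card_insert_le j st.2]
    · intro u hu
      obtain ⟨i, hi, hi', hiu⟩ := h.exists_claimer u hu
      refine ⟨i, mem_insert_of_mem hi, ?_, hiu⟩
      rintro hi''
      rcases mem_insert.1 hi'' with rfl | hi''
      exacts [hj hi, hi' hi'']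
    · intro i hi
      rcases mem_insert.1 hi with rfl | hi
      exacts [⟨hr, hl⟩, h.napkins_mem i hi]

theorem dineInvariant_foldl (l : List (Fin n)) (hl : l.Nodup) :
    DineInvariant w l.toFinset (l.foldl (dineStep σ w) (∅, ∅)) := by
  induction l using List.reverseRecOn with
  | nil => exact ⟨by simp, by simp, by simp, by simp⟩
  | append_singleton l j ih =>
    obtain ⟨hl, -, hjl⟩ := List.nodup_append.1 hl
    have hP : (l ++ [j]).toFinset = insert j l.toFinset := by
      ext
      simp
    rw [List.foldl_append, List.foldl_cons, List.foldl_nil, hP]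
    refine (ih hl).dineStep fun hj => ?_
    exact hjl j (List.mem_toFinset.1 hj) j (List.mem_singleton_self j) rfl

theorem DineInvariant.leftNapkin_ne {st : Finset (Fin n) × Finset (Fin n)}
    (h : DineInvariant w univ st) {j j' : Fin n} (hj : j ∈ st.2) (hj' : j' ∈ st.2) :
    leftNapkin (w.symm j') ≠ w.symm j := by
  intro hadj
  obtain ⟨i, -, hi, hclaim⟩ := h.exists_claimer _ (h.napkins_mem j hj).1
  rcases hclaim with hij | hij
  · exact hi (w.symm.injective hij ▸ hj)
  · exact hi (w.symm.injective (leftNapkin_injective (hij.trans hadj.symm)) ▸ hj')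

theorem DineInvariant.three_mul_card_le {st : Finset (Fin n) × Finset (Fin n)}
    (h : DineInvariant w univ st) : 3 * #st.2 ≤ n := by
  have hdisj : Disjoint (st.2.image w.symm) (st.2.image fun j => leftNapkin (w.symm j)) := by
    simp only [disjoint_left, mem_image]
    rintro _ ⟨j, hj, rfl⟩ ⟨j', hj', hadj⟩
    exact h.leftNapkin_ne hj hj' hadj
  have hsub : st.2.image w.symm ∪ st.2.image (fun j => leftNapkin (w.symm j)) ⊆ st.1 := by
    simp only [union_subset_iff, image_subset_iff]
    exact ⟨fun j hj => (h.napkins_mem j hj).1, fun j hj => (h.napkins_mem j hj).2⟩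
  have hclaimed := card_le_card hsub
  rw [card_union_of_disjoint hdisj, card_image_of_injective _ w.symm.injective,
    card_image_of_injective (f := fun j => leftNapkin (w.symm j)) _
      (leftNapkin_injective.comp w.symm.injective)] at hclaimed
  have hserved := h.card_le
  rw [card_univ, Fintype.card_fin] at hserved
  omega

variable (σ w) in
theorem three_mul_nu_le : 3 * nu σ w ≤ n := by
  have h := dineInvariant_foldl (σ := σ) (w := w) _ (List.nodup_finRange n)
  rw [List.toFinset_finRange] at h
  exact h.three_mul_card_le

end UpperBound

section Counting

def prefCount (σ : Fin n → Bool) (b : Bool) : ℕ → ℕ :=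
  Nat.count fun i => ∃ h : i < n, σ ⟨i, h⟩ = b

/-- Diner `i` is not among the first `q` diners with their preference. -/
def IsSpare (σ : Fin n → Bool) (q i : ℕ) : Prop :=
  ∃ h : i < n, q ≤ prefCount σ (σ ⟨i, h⟩) i

instance (σ : Fin n → Bool) (q : ℕ) : DecidablePred (IsSpare σ q) := fun _ => by
  unfold IsSpare; infer_instance

def spareCount (σ : Fin n → Bool) (q : ℕ) : ℕ → ℕ := Nat.count (IsSpare σ q)

def BoundedDiscrepancy (σ : Fin n → Bool) (m : ℕ) : Prop :=
  ∀ i ≤ n, ∀ b, prefCount σ b i ≤ prefCount σ (!b) i + m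

variable (σ : Fin n → Bool)

theorem isSpare_iff (i : Fin n) : IsSpare σ q i ↔ q ≤ prefCount σ (σ i) i :=
  ⟨fun ⟨_, h⟩ => h, fun h => ⟨i.isLt, h⟩⟩

theorem prefCount_succ {i : ℕ} (hi : i < n) (b : Bool) :
    prefCount σ b (i + 1) = prefCount σ b i + if σ ⟨i, hi⟩ = b then 1 else 0 := by
  simp [prefCount, Nat.count_succ, hi]

theorem prefCount_true_add_false {i : ℕ} (hi : i ≤ n) :
    prefCount σ true i + prefCount σ false i = i := by
  induction i with
  | zero => simp [prefCount]
  | succ i ih =>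
    have := ih (by omega)
    rw [prefCount_succ σ hi, prefCount_succ σ hi]
    cases σ ⟨i, hi⟩ <;> simp <;> omega

theorem prefCount_not (b : Bool) : prefCount (fun j => !σ j) b = prefCount σ (!b) := by
  unfold prefCount
  congr 1
  ext i
  simp only [Bool.not_eq_eq_eq_not]

theorem sum_sign_eq_prefCount_sub {i : ℕ} (hi : i ≤ n) :
    ∑ j ∈ univ.filter (fun j : Fin n => (j : ℕ) < i), sign (σ j) =
      (prefCount σ true i : ℤ) - prefCount σ false i := by
  induction i with
  | zero => simp [prefCount]
  | succ i ih =>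
    have hprefix : univ.filter (fun j : Fin n => (j : ℕ) < i + 1) =
        insert ⟨i, hi⟩ (univ.filter fun j : Fin n => (j : ℕ) < i) := by
      ext j
      simp only [mem_filter, mem_univ, true_and, mem_insert, Fin.ext_iff]
      omega
    rw [hprefix, sum_insert (by simp), ih (by omega), prefCount_succ σ hi, prefCount_succ σ hi]
    cases σ ⟨i, hi⟩ <;> simp [sign] <;> ring

theorem prefCount_le_add_drift {i : ℕ} (hi : i ≤ n) :
    prefCount σ true i ≤ prefCount σ false i + drift σ := by
  have h := le_sup (f := fun i => (∑ j ∈ univ.filter (fun j : Fin n => (j : ℕ) < i),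
    sign (σ j)).toNat) (mem_range.2 (Nat.lt_succ_of_le hi))
  rw [sum_sign_eq_prefCount_sub σ hi] at h
  change _ ≤ drift σ at h
  omega

theorem boundedDiscrepancy_of_drift_le {m : ℕ} (h : drift σ ≤ m)
    (h' : drift (fun j => !σ j) ≤ m) : BoundedDiscrepancy σ m := by
  intro i hi b
  cases b
  · have := prefCount_le_add_drift (fun j => !σ j) hi
    rw [prefCount_not, prefCount_not] at this
    simp only [Bool.not_true, Bool.not_false] at this ⊢
    omega
  · have := prefCount_le_add_drift σ hi
    simp only [Bool.not_true]
    omega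

theorem spareCount_add_min_prefCount (q : ℕ) {i : ℕ} (hi : i ≤ n) :
    spareCount σ q i + min q (prefCount σ true i) + min q (prefCount σ false i) = i := by
  induction i with
  | zero => simp [spareCount, prefCount]
  | succ i ih =>
    have := ih (by omega)
    have hspare := isSpare_iff σ (q := q) ⟨i, hi⟩
    rw [spareCount, Nat.count_succ, ← spareCount, prefCount_succ σ hi, prefCount_succ σ hi]
    cases hσ : σ ⟨i, hi⟩ <;> rw [hσ] at hspare <;> split_ifs <;> simp_all <;> omega

/-- If at most `k` diners before the spare diner `Z` prefer `b`, then `Z` prefers `!b`, and counting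
spare diners shows that `q + r + k + 1` diners up to `Z` prefer `!b`. -/
theorem lt_prefCount_of_isSpare {r k Z : ℕ}
    (hdisc : BoundedDiscrepancy σ (q + r))
    (hk : k < q) (hZ : IsSpare σ q Z) (hcount : spareCount σ q Z = r + k) (b : Bool) :
    k < prefCount σ b Z := by
  obtain ⟨hZn, hspare⟩ := hZ
  have hsum := prefCount_true_add_false σ hZn.le
  have hmin := spareCount_add_min_prefCount σ q hZn.le
  have hT := prefCount_succ σ hZn true
  have hF := prefCount_succ σ hZn false
  have hdT := hdisc (Z + 1) hZn true
  have hdF := hdisc (Z + 1) hZn false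
  cases b <;> cases hσ : σ ⟨Z, hZn⟩ <;> simp_all <;> omega

end Counting

section Layout

/-- Seats `3k`, `3k + 1`, `3k + 2` (for `k < q`) go to the `k`-th diner preferring the right, the
`(r + k)`-th spare diner and the `k`-th diner preferring the left; the first `r` spare diners fill
the seats from `3q` on. -/
def layout (σ : Fin n → Bool) (q r : ℕ) (i : Fin n) : ℕ :=
  if q ≤ prefCount σ (σ i) i then
    if spareCount σ q i < r then 3 * q + spareCount σ q i else 3 * (spareCount σ q i - r) + 1
  else 3 * prefCount σ (σ i) i + if σ i then 0 else 2

variable (σ : Fin n → Bool) {q r : ℕ}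

theorem spareCount_lt_of_isSpare (hnr : n = 3 * q + r) (hdisc : BoundedDiscrepancy σ (q + r))
    {i : ℕ} (hi : IsSpare σ q i) : spareCount σ q i < q + r := by
  have hlt : spareCount σ q i < spareCount σ q n := Nat.count_strict_mono hi hi.1
  have hsum := prefCount_true_add_false σ (le_refl n)
  have hmin := spareCount_add_min_prefCount σ q (le_refl n)
  have hT := hdisc n le_rfl true
  have hF := hdisc n le_rfl false
  simp only [Bool.not_true, Bool.not_false] at hT hF
  omega

theorem layout_lt (hnr : n = 3 * q + r) (hdisc : BoundedDiscrepancy σ (q + r)) (i : Fin n) :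
    layout σ q r i < n := by
  unfold layout
  split_ifs with hspare <;> first
    | omega
    | (have := spareCount_lt_of_isSpare σ hnr hdisc ((isSpare_iff σ i).2 hspare); omega)

theorem eq_of_prefCount_eq {i j : Fin n} (hσ : σ i = σ j)
    (h : prefCount σ (σ i) i = prefCount σ (σ j) j) : i = j := by
  rw [← hσ] at h
  exact Fin.ext (Nat.count_injective ⟨i.isLt, rfl⟩ ⟨j.isLt, hσ.symm⟩ h)

theorem eq_of_spareCount_eq {i j : Fin n} (hi : q ≤ prefCount σ (σ i) i)
    (hj : q ≤ prefCount σ (σ j) j) (h : spareCount σ q i = spareCount σ q j) : i = j :=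
  Fin.ext (Nat.count_injective ((isSpare_iff σ i).2 hi) ((isSpare_iff σ j).2 hj) h)

theorem layout_injective (hnr : n = 3 * q + r) (hdisc : BoundedDiscrepancy σ (q + r)) :
    Function.Injective (layout σ q r) := by
  intro i j hij
  have hi := fun h => spareCount_lt_of_isSpare σ hnr hdisc ((isSpare_iff σ i).2 h)
  have hj := fun h => spareCount_lt_of_isSpare σ hnr hdisc ((isSpare_iff σ j).2 h)
  unfold layout at hij
  split_ifs at hij <;> first
    | omega
    | exact eq_of_spareCount_eq σ ‹_› ‹_› (by
        have := hi ‹q ≤ prefCount σ (σ i) i›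
        have := hj ‹q ≤ prefCount σ (σ j) j›
        omega)
    | exact eq_of_prefCount_eq σ (by simp_all) (by omega)

theorem layout_eq_three_mul {i : Fin n} {k : ℕ} (hk : k < q) (h : layout σ q r i = 3 * k) :
    σ i = true ∧ prefCount σ true i = k := by
  unfold layout at h
  split_ifs at h with hspare _ hσ <;> first | omega | (rw [hσ] at h; exact ⟨hσ, by omega⟩)

theorem layout_eq_three_mul_add_one {i : Fin n} {k : ℕ} (hk : k < q)
    (h : layout σ q r i = 3 * k + 1) : IsSpare σ q i ∧ spareCount σ q i = r + k := by
  unfold layout at h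
  split_ifs at h with hspare <;> first | omega | exact ⟨(isSpare_iff σ i).2 hspare, by omega⟩

theorem layout_eq_three_mul_add_two {i : Fin n} {k : ℕ} (hk : k < q)
    (h : layout σ q r i = 3 * k + 2) : σ i = false ∧ prefCount σ false i = k := by
  unfold layout at h
  split_ifs at h with hspare _ hσ <;> first
    | omega
    | (rw [Bool.not_eq_true] at hσ; rw [hσ] at h; exact ⟨hσ, by omega⟩)

end Layout

section Seating

variable [NeZero n] (σ : Fin n → Bool) {q r : ℕ}

theorem mem_napkinless_of_layout (hnr : n = 3 * q + r) (hdisc : BoundedDiscrepancy σ (q + r))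
    {w : Equiv.Perm (Fin n)} {c : Fin n}
    (hw : ∀ i, ((w.symm i + c : Fin n) : ℕ) = layout σ q r i)
    {k : ℕ} (hk : k < q) {Z : Fin n} (hZ : layout σ q r Z = 3 * k + 1) :
    Z ∈ napkinless σ w := by
  have hseat : ∀ s < n, ∃ i, layout σ q r i = s := fun s hs =>
    ⟨w (⟨s, hs⟩ - c), by rw [← hw, Equiv.symm_apply_apply, sub_add_cancel]⟩
  obtain ⟨X, hX⟩ := hseat (3 * k) (by omega)
  obtain ⟨Y, hY⟩ := hseat (3 * k + 2) (by omega)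
  obtain ⟨hσX, hcX⟩ := layout_eq_three_mul σ hk hX
  obtain ⟨hZs, hcZ⟩ := layout_eq_three_mul_add_one σ hk hZ
  obtain ⟨hσY, hcY⟩ := layout_eq_three_mul_add_two σ hk hY
  have hleft : ∀ a b, layout σ q r a = layout σ q r b + 1 →
      leftNapkin (w.symm a) = w.symm b := by
    intro a b h
    apply add_right_cancel (b := c)
    rw [← leftNapkin_add]
    exact leftNapkin_eq_of_val_eq_succ (by rw [hw, hw, h])
  have hbefore : ∀ {b : Bool} {i : Fin n}, prefCount σ b i = k → i < Z := fun h =>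
    (Nat.count_monotone _).reflect_lt (h ▸ lt_prefCount_of_isSpare σ hdisc hk hZs hcZ _)
  refine mem_napkinless_of_neighbours (hbefore hcX) (hbefore hcY) ?_ ?_
  · rw [prefNapkin, if_pos hσX]
    exact (hleft Z X (by omega)).symm
  · rw [prefNapkin, hσY, if_neg (by simp)]
    exact hleft Y Z (by omega)

theorem exists_isSeating_le_nu (hnr : n = 3 * q + r) (hdisc : BoundedDiscrepancy σ (q + r)) :
    ∃ w, IsSeating w ∧ q ≤ nu σ w := by
  let L : Fin n → Fin n := fun i => ⟨layout σ q r i, layout_lt σ hnr hdisc i⟩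
  have hL : L.Bijective := Finite.injective_iff_bijective.1 fun i j h =>
    layout_injective σ hnr hdisc (congrArg Fin.val h)
  let w := ((Equiv.ofBijective L hL).trans (Equiv.subRight (L 0))).symm
  have hw : ∀ i, ((w.symm i + L 0 : Fin n) : ℕ) = layout σ q r i := fun i => by simp [w, L]
  refine ⟨w, fun i hi => ?_, ?_⟩
  · rw [show i = 0 from Fin.ext hi]
    simp [w]
  · let Z : Fin q → Fin n := fun k => w (⟨3 * k + 1, by omega⟩ - L 0)
    have hZ : ∀ k, layout σ q r (Z k) = 3 * k + 1 := fun k => by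
      rw [← hw, Equiv.symm_apply_apply, sub_add_cancel]
    have hZinj : Z.Injective := fun a b hab => by
      have := congrArg (layout σ q r) hab
      rw [hZ, hZ] at this
      exact Fin.ext (by omega)
    calc q = #(univ : Finset (Fin q)) := by simp
      _ ≤ nu σ w := card_le_card_of_injOn Z
        (fun k _ => mem_napkinless_of_layout σ hnr hdisc hw k.isLt (hZ k)) hZinj.injOn

end Seating

theorem le_nuMax {σ : Fin n → Bool} {r : ℕ} (hnr : n = 3 * q + r)
    (hdisc : BoundedDiscrepancy σ (q + r)) : q ≤ nuMax σ := by
  rcases Nat.eq_zero_or_pos q with rfl | hq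
  · exact Nat.zero_le _
  have : NeZero n := ⟨by omega⟩
  obtain ⟨w, hw, hnu⟩ := exists_isSeating_le_nu σ hnr hdisc
  exact hnu.trans (le_sup (mem_filter.2 ⟨mem_univ _, hw⟩))

theorem nuMax_le (σ : Fin n → Bool) : nuMax σ ≤ n / 3 :=
  Finset.sup_le fun w _ => by have := three_mul_nu_le σ w; omega

theorem statement7_general (n q r : ℕ) (hq : q = n / 3) (hnr : n = 3 * q + r)
    (σ : Fin n → Bool) (h : ℕ) (hmax : h = max (drift σ) (drift fun j => !σ j))
    (hle : h ≤ q + r) :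
    nuMax σ = q := by
  subst hmax
  have hdisc : BoundedDiscrepancy σ (q + r) :=
    boundedDiscrepancy_of_drift_le σ (le_of_max_le_left hle) (le_of_max_le_right hle)
  exact le_antisymm (hq ▸ nuMax_le σ) (le_nuMax hnr hdisc)

/-- Write `n = 3q + r` with `q = ⌊n/3⌋` and let
`h = max(h(σ), h(-σ))`.  If `h ≤ q + r` then `ν_max(σ) = q`. -/
theorem statement7 (n q r : ℕ) (hn : 1 ≤ n) (hq : q = n / 3) (hnr : n = 3 * q + r)
    (σ : Fin n → Bool) (h : ℕ) (hmax : h = max (drift σ) (drift fun j => !σ j))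
    (hle : h ≤ q + r) :
    nuMax σ = q :=
  statement7_general n q r hq hnr σ h hmax hle

end Napkin
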